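/- arXiv:2102.03822 — 2 statements merged into one kernel-verified Lean document; each statement's English description precedes it below -/
import Mathlib

section
/- Let q be an odd prime power, d a non-square in F_q*, and α in F_{q^2} with α² = d. Let γ be an element of Q = {γ in F_{q^2} : γ^{q+1} = 1}, written γ = x + y*α with x, y in F_q. If γ ≠ 1, then ψ(α*γ) = y*d/(x−1). If moreover γ ≠ −1, then ψ(α*γ²) = x/y. -/
/-!
Since `d` is not a square in `K`, Euler's criterion gives `d ^ ((q - 1) / 2) = -1`, hence
`α ^ q = -α`. As `z ↦ z ^ q` is additive and fixes `K`, it sends `γ = x + y α` to its conjugate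
`x - y α`, so `γ ^ (q + 1) = 1` is the norm equation `x² - y² d = 1`. Both formulas are then
identities in the field, once this relation and `α² = d` are used.
-/

namespace Subfield

variable {F : Type*} [Field F] (K : Subfield F) [Finite K]

theorem pow_natCard_of_mem {x : F} (hx : x ∈ K) : x ^ Nat.card K = x := by
  have := Fintype.ofFinite K
  simpa [Nat.card_eq_fintype_card] using
    congrArg Subtype.val (FiniteField.pow_card (⟨x, hx⟩ : K))

theorem add_pow_natCard (a b : F) :
    (a + b) ^ Nat.card K = a ^ Nat.card K + b ^ Nat.card K := by
  have := Fintype.ofFinite K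
  have := ringChar.charP K
  obtain ⟨n, hp, hcard⟩ := FiniteField.card K (ringChar K)
  have : Fact (ringChar K).Prime := ⟨hp⟩
  have : CharP F (ringChar K) := charP_of_injective_ringHom K.subtype_injective _
  rw [Nat.card_eq_fintype_card, hcard, add_pow_char_pow]

theorem pow_natCard_div_two_eq_neg_one (hK : Odd (Nat.card K)) {d : F} (hdK : d ∈ K)
    (hd : ¬ ∃ c ∈ K, c * c = d) : d ^ (Nat.card K / 2) = -1 := by
  have := Fintype.ofFinite K
  have hchar : ringChar K ≠ 2 := fun h => by
    have := FiniteField.even_card_of_char_two h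
    rw [← Nat.card_eq_fintype_card] at this
    exact Nat.not_even_iff_odd.mpr hK (Nat.even_iff.mpr this)
  have hd0 : (⟨d, hdK⟩ : K) ≠ 0 := fun h =>
    hd ⟨0, K.zero_mem, by simpa using (congrArg Subtype.val h).symm⟩
  have hnsq : ¬ IsSquare (⟨d, hdK⟩ : K) := fun ⟨c, hc⟩ =>
    hd ⟨c, c.2, by simpa using (congrArg Subtype.val hc).symm⟩
  rw [FiniteField.isSquare_iff hchar hd0] at hnsq
  have := (FiniteField.pow_dichotomy hchar hd0).resolve_left hnsq
  simpa [Nat.card_eq_fintype_card] using congrArg Subtype.val this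

theorem pow_natCard_eq_neg (hK : Odd (Nat.card K)) {d α : F} (hdK : d ∈ K)
    (hd : ¬ ∃ c ∈ K, c * c = d) (hα : α ^ 2 = d) : α ^ Nat.card K = -α := by
  obtain ⟨t, ht⟩ := hK
  have hdiv : Nat.card K / 2 = t := by omega
  have := K.pow_natCard_div_two_eq_neg_one ⟨t, ht⟩ hdK hd
  rw [ht, pow_succ, pow_mul, hα, ← hdiv, this, neg_one_mul]

theorem pow_natCard_add_mul (hK : Odd (Nat.card K)) {d α x y : F} (hdK : d ∈ K)
    (hd : ¬ ∃ c ∈ K, c * c = d) (hα : α ^ 2 = d) (hx : x ∈ K) (hy : y ∈ K) :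
    (x + y * α) ^ Nat.card K = x - y * α := by
  rw [K.add_pow_natCard, mul_pow, K.pow_natCard_of_mem hx, K.pow_natCard_of_mem hy,
    K.pow_natCard_eq_neg hK hdK hd hα, mul_neg, sub_eq_add_neg]

theorem sq_sub_sq_mul_eq_one (hK : Odd (Nat.card K)) {d α x y : F} (hdK : d ∈ K)
    (hd : ¬ ∃ c ∈ K, c * c = d) (hα : α ^ 2 = d) (hx : x ∈ K) (hy : y ∈ K)
    (hγ : (x + y * α) ^ (Nat.card K + 1) = 1) : x ^ 2 - y ^ 2 * d = 1 := by
  rw [pow_succ, K.pow_natCard_add_mul hK hdK hd hα hx hy] at hγ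
  linear_combination hγ + y ^ 2 * hα

end Subfield

/-- The map `ψ` away from its pole `z = α`. -/
def moebius {F : Type*} [Field F] (α d z : F) : F := (α * z + d) / (z - α)

section Moebius

variable {F : Type*} [Field F] {α d x y : F}

theorem moebius_mul_eq (hα : α ^ 2 = d) (hα0 : α ≠ 0) (hnorm : x ^ 2 - y ^ 2 * d = 1)
    (hγ : x + y * α ≠ 1) : moebius α d (α * (x + y * α)) = y * d / (x - 1) := by
  have hx : x - 1 ≠ 0 := by
    intro hx
    obtain rfl : x = 1 := sub_eq_zero.mp hx
    obtain rfl : y = 0 := by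
      simpa [← hα, hα0] using (by linear_combination -hnorm : y ^ 2 * d = 0)
    simp at hγ
  have hden : α * (x + y * α) - α ≠ 0 :=
    mul_sub_one α _ ▸ mul_ne_zero hα0 (sub_ne_zero.mpr hγ)
  rw [moebius, div_eq_div_iff hden hx]
  linear_combination (x ^ 2 + α * x * y - y ^ 2 * d - x - α * y) * hα + d * hnorm

theorem moebius_mul_sq_eq (hα : α ^ 2 = d) (hα0 : α ≠ 0) (hnorm : x ^ 2 - y ^ 2 * d = 1)
    (hγ : (x + y * α) ^ 2 ≠ 1) : moebius α d (α * (x + y * α) ^ 2) = x / y := by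
  have hy : y ≠ 0 := by
    rintro rfl
    exact hγ (by linear_combination hnorm)
  have hden : α * (x + y * α) ^ 2 - α ≠ 0 :=
    mul_sub_one α _ ▸ mul_ne_zero hα0 (sub_ne_zero.mpr hγ)
  rw [moebius, div_eq_div_iff hden hy]
  linear_combination
    (-(x ^ 2 * y) + α * x * y ^ 2 + y ^ 3 * (α ^ 2 + d)) * hα - (α * x + d * y) * hnorm

end Moebius

theorem stmt_17_general (q : ℕ) (hq : Odd q)
    (F : Type*) [Field F]
    (K : Subfield F) (hK : Nat.card K = q)
    (d : F) (hdK : d ∈ K) (hdns : ¬ ∃ c ∈ K, c * c = d)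
    (α : F) (hα : α ^ 2 = d)
    (ψ : F → F) (hψ : ∀ γ : F, γ ≠ α → ψ γ = (α * γ + d) / (γ - α))
    (γ x y : F) (hγQ : γ ^ (q + 1) = 1)
    (hx : x ∈ K) (hy : y ∈ K) (hγ : γ = x + y * α) :
    (γ ≠ 1 → ψ (α * γ) = y * d / (x - 1)) ∧
    (γ ≠ 1 → γ ≠ -1 → ψ (α * γ ^ 2) = x / y) := by
  subst hK hγ
  have : Finite K := Nat.finite_of_card_ne_zero hq.pos.ne'
  have hα0 : α ≠ 0 := by rintro rfl; exact hdns ⟨0, K.zero_mem, by simp [← hα]⟩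
  have hnorm := K.sq_sub_sq_mul_eq_one hq hdK hdns hα hx hy hγQ
  refine ⟨fun hγ₁ => ?_, fun hγ₁ hγ₂ => ?_⟩
  · rw [hψ _ ((mul_eq_left₀ hα0).not.mpr hγ₁)]
    exact moebius_mul_eq hα hα0 hnorm hγ₁
  · have hsq : (x + y * α) ^ 2 ≠ 1 := by
      rw [sq, Ne, mul_self_eq_one_iff, not_or]
      exact ⟨hγ₁, hγ₂⟩
    rw [hψ _ ((mul_eq_left₀ hα0).not.mpr hsq)]
    exact moebius_mul_sq_eq hα hα0 hnorm hsq

/-- for γ = x + y·α in Q = {γ : γ^{q+1} = 1}: if γ ≠ 1 then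
ψ(αγ) = yd/(x−1); if moreover γ ≠ −1 then ψ(αγ²) = x/y. -/
theorem stmt_17 (q : ℕ) (hq : Odd q) (hq' : IsPrimePow q)
    (F : Type*) [Field F] (hF : Nat.card F = q ^ 2)
    (K : Subfield F) (hK : Nat.card K = q)
    (d : F) (hdK : d ∈ K) (hd0 : d ≠ 0) (hdns : ¬ ∃ c ∈ K, c * c = d)
    (α : F) (hα : α ^ 2 = d)
    (ψ : F → F) (hψ : ∀ γ : F, γ ≠ α → ψ γ = (α * γ + d) / (γ - α)) (hψα : ψ α = α)
    (γ x y : F) (hγQ : γ ^ (q + 1) = 1)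
    (hx : x ∈ K) (hy : y ∈ K) (hγ : γ = x + y * α) :
    (γ ≠ 1 → ψ (α * γ) = y * d / (x - 1)) ∧
    (γ ≠ 1 → γ ≠ -1 → ψ (α * γ ^ 2) = x / y) :=
  stmt_17_general q hq F K hK d hdK hdns α hα ψ hψ γ x y hγQ hx hy hγ
end

section
/- Let q be an odd prime power, d a non-square in F_q*, α in F_{q^2} with α² = d, Q = {γ in F_{q^2} : γ^{q+1} = 1}, and Q₀ = {γ² : γ in Q}. If q ≡ 1 (mod 4), then ψ(α·Q₀) = {α} ∪ {c in F_q : c − α is a square in F_{q^2}}, the maximal clique of size (q+1)/2 from the (F_q, α)-construction. If q ≡ 3 (mod 4), then ψ(α·Q₀ ∪ {0}) = {α, −α} ∪ {c in F_q : c − α is a square in F_{q^2}}, the maximal clique of size (q+3)/2 from the (F_q, α)-construction. -/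
/-!
Let `σ x = x ^ q` be the Frobenius of `F` over `K`: its fixed field is `K`, `σ α = -α`, and `Q`
is the set of `γ` with `σ γ = γ⁻¹`. For `γ ≠ 1` we have `ψ (α γ) = α (γ + 1) / (γ - 1)`, and this
Cayley transform maps `Q \ {1}` bijectively onto `K`, with inverse
`c ↦ (c + α) / (c - α) = (c - α) ^ (q - 1)`. So if `c - α = y²` then `γ = δ²` with
`δ = y ^ (q - 1) ∈ Q`; conversely, if `γ = δ²` with `δ ∈ Q`, then
`(c - α) ^ ((q² - 1) / 2) = γ ^ ((q + 1) / 2) = δ ^ (q + 1) = 1`, and Euler's criterion makes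
`c - α` a square. The point `γ = 1` contributes `ψ α = α`, and `ψ 0 = -α`.
-/
open Polynomial FiniteField

def cayley {F : Type*} [Field F] (α γ : F) : F := α * (γ + 1) / (γ - 1)

theorem cayley_eq_iff {F : Type*} [Field F] {α γ c : F} (hγ : γ ≠ 1) (hc : c ≠ α) :
    cayley α γ = c ↔ (c + α) / (c - α) = γ := by
  rw [cayley, div_eq_iff (sub_ne_zero.2 hγ), div_eq_iff (sub_ne_zero.2 hc)]
  constructor <;> intro h <;> linear_combination h

namespace Subfield

variable {F : Type*} [Field F] {K : Subfield F} [Fintype K]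

theorem mem_iff_pow_card_eq_self {x : F} : x ∈ K ↔ x ^ Fintype.card K = x := by
  have hsplit : (X ^ Fintype.card K - X : K[X]).Splits := by
    rw [splits_iff_card_roots, roots_X_pow_card_sub_X, ← Finset.card_def, Finset.card_univ,
      X_pow_card_sub_X_natDegree_eq _ Fintype.one_lt_card]
  have hX : (X ^ Fintype.card K : F[X]) ≠ X :=
    sub_ne_zero.1 (X_pow_card_sub_X_ne_zero F Fintype.one_lt_card)
  have := roots_X_pow_card_sub_X K ▸ hsplit.roots_map K.subtype ▸ Multiset.mem_map (b := x)
  simpa [sub_eq_zero, hX] using this.symm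

theorem pow_card_eq_neg_of_sq_mem {α : F} (hα2 : α ^ 2 ∈ K) (hα : α ∉ K) :
    α ^ Fintype.card K = -α := by
  have hsq : (α ^ Fintype.card K) ^ 2 = α ^ 2 := by
    rw [← pow_mul, mul_comm, pow_mul, mem_iff_pow_card_eq_self.1 hα2]
  exact (sq_eq_sq_iff_eq_or_eq_neg.1 hsq).resolve_left (mt mem_iff_pow_card_eq_self.2 hα)

theorem sub_pow_card {α c : F} (hα : α ^ Fintype.card K = -α) (hc : c ∈ K) :
    (c - α) ^ Fintype.card K = c + α := by
  calc (c - α) ^ Fintype.card K = c ^ Fintype.card K - α ^ Fintype.card K :=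
        map_sub (frobeniusAlgHom K F) c α
    _ = c + α := by rw [mem_iff_pow_card_eq_self.1 hc, hα, sub_neg_eq_add]

theorem sub_pow_card_sub_one {α c : F} (hα : α ^ Fintype.card K = -α) (hc : c ∈ K)
    (hcα : c ≠ α) : (c - α) ^ (Fintype.card K - 1) = (c + α) / (c - α) := by
  rw [pow_sub₀ _ (sub_ne_zero.2 hcα) Fintype.card_pos, pow_one, sub_pow_card hα hc, div_eq_mul_inv]

theorem cayley_mem {α γ : F} (hα : α ^ Fintype.card K = -α)
    (hγ : γ ^ (Fintype.card K + 1) = 1) (hγ1 : γ ≠ 1) : cayley α γ ∈ K := by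
  have hγ0 : γ ≠ 0 := by rintro rfl; simp at hγ
  have hγq : γ ^ Fintype.card K = γ⁻¹ := eq_inv_of_mul_eq_one_left (by rwa [← pow_succ])
  have hγsub : γ - 1 ≠ 0 := sub_ne_zero.2 hγ1
  rw [mem_iff_pow_card_eq_self]
  calc cayley α γ ^ Fintype.card K = frobeniusAlgHom K F (α * (γ + 1) / (γ - 1)) := rfl
    _ = α ^ Fintype.card K * (γ ^ Fintype.card K + 1) / (γ ^ Fintype.card K - 1) := by
      simp only [map_div₀, map_mul, map_add, map_sub, map_one, frobeniusAlgHom_apply]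
    _ = cayley α γ := by
      rw [hα, hγq, cayley]
      field_simp
      ring

variable [Fintype F]

theorem ringChar_ne_two (hq : Odd (Fintype.card K)) (hF : Fintype.card F = Fintype.card K ^ 2) :
    ringChar F ≠ 2 := fun h => by
  have := even_card_of_char_two h
  rw [hF, Nat.odd_iff.1 hq.pow] at this
  exact one_ne_zero this

theorem pow_card_sub_one_mul_card_add_one (hF : Fintype.card F = Fintype.card K ^ 2) {y : F}
    (hy : y ≠ 0) : y ^ ((Fintype.card K - 1) * (Fintype.card K + 1)) = 1 := by
  have hsq := Nat.sq_sub_sq (Fintype.card K) 1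
  rw [one_pow] at hsq
  rw [← pow_card_sub_one_eq_one y hy, hF, hsq, mul_comm]

theorem isSquare_iff_pow_card_sub_one (hq : Odd (Fintype.card K))
    (hF : Fintype.card F = Fintype.card K ^ 2) {x : F} (hx : x ≠ 0) :
    IsSquare x ↔ (x ^ (Fintype.card K - 1)) ^ ((Fintype.card K + 1) / 2) = 1 := by
  rw [isSquare_iff (ringChar_ne_two hq hF) hx, ← pow_mul, hF]
  obtain ⟨s, hs⟩ := hq
  rw [hs, show (2 * s + 1) ^ 2 / 2 = (2 * s + 1 - 1) * ((2 * s + 1 + 1) / 2) by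
    rw [show (2 * s + 1) ^ 2 = 2 * (2 * s * (s + 1)) + 1 by ring, show 2 * s + 1 - 1 = 2 * s by omega,
      show (2 * s + 1 + 1) / 2 = s + 1 by omega]; omega]

theorem cayley_sq_mem_of_pow_card_add_one (hq : Odd (Fintype.card K))
    (hF : Fintype.card F = Fintype.card K ^ 2) {α δ : F} (hαK : α ∉ K)
    (hα : α ^ Fintype.card K = -α) (hδ : δ ^ (Fintype.card K + 1) = 1) (hδ1 : δ ^ 2 ≠ 1) :
    cayley α (δ ^ 2) ∈ K ∧ IsSquare (cayley α (δ ^ 2) - α) := by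
  have hγ : (δ ^ 2) ^ (Fintype.card K + 1) = 1 := by rw [← pow_mul, mul_comm, pow_mul, hδ, one_pow]
  have hc := cayley_mem hα hγ hδ1
  have hcα : cayley α (δ ^ 2) ≠ α := fun h => hαK (h ▸ hc)
  refine ⟨hc, (isSquare_iff_pow_card_sub_one hq hF (sub_ne_zero.2 hcα)).2 ?_⟩
  rw [sub_pow_card_sub_one hα hc hcα, (cayley_eq_iff hδ1 hcα).1 rfl, ← pow_mul,
    Nat.mul_div_cancel' hq.add_one.two_dvd, hδ]

theorem exists_cayley_sq_eq (hq : Odd (Fintype.card K))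
    (hF : Fintype.card F = Fintype.card K ^ 2) {α c : F} (hαK : α ∉ K)
    (hα : α ^ Fintype.card K = -α) (hc : c ∈ K) (hsq : IsSquare (c - α)) :
    ∃ δ : F, δ ^ (Fintype.card K + 1) = 1 ∧ δ ^ 2 ≠ 1 ∧ cayley α (δ ^ 2) = c := by
  obtain ⟨y, hy⟩ := hsq
  have hcα : c ≠ α := fun h => hαK (h ▸ hc)
  have hy0 : y ≠ 0 := by rintro rfl; exact sub_ne_zero.2 hcα (by rw [hy, mul_zero])
  have hδ2 : (y ^ (Fintype.card K - 1)) ^ 2 = (c + α) / (c - α) := by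
    rw [← pow_mul, mul_comm, pow_mul, sq, ← hy, sub_pow_card_sub_one hα hc hcα]
  have hγ1 : (c + α) / (c - α) ≠ 1 := by
    rw [Ne, div_eq_one_iff_eq (sub_ne_zero.2 hcα)]
    intro h
    have h2α : (2 : F) * α = 0 := by linear_combination h
    have hα0 := (mul_eq_zero.1 h2α).resolve_left (Ring.two_ne_zero (ringChar_ne_two hq hF))
    exact hαK (hα0 ▸ K.zero_mem)
  refine ⟨y ^ (Fintype.card K - 1), ?_, hδ2 ▸ hγ1, (cayley_eq_iff (hδ2 ▸ hγ1) hcα).2 hδ2.symm⟩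
  rw [← pow_mul, pow_card_sub_one_mul_card_add_one hF hy0]

theorem image_cayley_sq_pow_card_add_one (hq : Odd (Fintype.card K))
    (hF : Fintype.card F = Fintype.card K ^ 2) {α : F} (hαK : α ∉ K)
    (hα : α ^ Fintype.card K = -α) :
    cayley α '' ((fun δ => δ ^ 2) '' {δ | δ ^ (Fintype.card K + 1) = 1} \ {1}) =
      {c | c ∈ K ∧ IsSquare (c - α)} := by
  ext c
  constructor
  · rintro ⟨_, ⟨⟨δ, hδ, rfl⟩, hδ1⟩, rfl⟩
    exact cayley_sq_mem_of_pow_card_add_one hq hF hαK hα hδ hδ1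
  · rintro ⟨hc, hsq⟩
    obtain ⟨δ, hδ, hδ1, rfl⟩ := exists_cayley_sq_eq hq hF hαK hα hc hsq
    exact ⟨_, ⟨⟨δ, hδ, rfl⟩, hδ1⟩, rfl⟩

end Subfield

theorem stmt_18_general (q : ℕ) (hq : Odd q)
    (F : Type*) [Field F] (hF : Nat.card F = q ^ 2)
    (K : Subfield F) (hK : Nat.card K = q)
    (d : F) (hdK : d ∈ K) (hdns : ¬ ∃ c ∈ K, c * c = d)
    (α : F) (hα : α ^ 2 = d)
    (ψ : F → F) (hψ : ∀ γ : F, γ ≠ α → ψ γ = (α * γ + d) / (γ - α)) (hψα : ψ α = α)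
    (Q Q₀ : Set F) (hQ : Q = {γ : F | γ ^ (q + 1) = 1})
    (hQ₀ : Q₀ = (fun γ => γ ^ 2) '' Q) :
    (q % 4 = 1 →
      ψ '' ((fun x => α * x) '' Q₀) = {α} ∪ {x : F | x ∈ K ∧ IsSquare (x - α)}) ∧
    (q % 4 = 3 →
      ψ '' (((fun x => α * x) '' Q₀) ∪ {0})
        = {α, -α} ∪ {x : F | x ∈ K ∧ IsSquare (x - α)}) := by
  have : Finite F := Nat.finite_of_card_ne_zero (by rw [hF]; exact pow_ne_zero 2 hq.pos.ne')
  have := Fintype.ofFinite F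
  have := Fintype.ofFinite K
  rw [Nat.card_eq_fintype_card] at hF hK
  subst hK hQ₀ hQ hα
  have hαK : α ∉ K := fun h => hdns ⟨α, h, (sq α).symm⟩
  have hα0 : α ≠ 0 := fun h => hαK (h ▸ K.zero_mem)
  have hσα := Subfield.pow_card_eq_neg_of_sq_mem hdK hαK
  have hψ_cayley : ∀ γ ∈ (fun δ => δ ^ 2) '' {δ : F | δ ^ (Fintype.card K + 1) = 1} \ {1},
      ψ (α * γ) = cayley α γ := fun γ hγ => by
    have hγsub : γ - 1 ≠ 0 := sub_ne_zero.2 hγ.2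
    rw [hψ _ (fun h => hγ.2 (mul_left_cancel₀ hα0 (h.trans (mul_one α).symm))), cayley]
    field_simp
  have hψ0 : ψ 0 = -α := by
    rw [hψ 0 hα0.symm]
    field_simp
    ring
  have hmain : ψ '' ((fun x => α * x) '' ((fun δ => δ ^ 2) '' {δ | δ ^ (Fintype.card K + 1) = 1}))
      = {α} ∪ {x : F | x ∈ K ∧ IsSquare (x - α)} := by
    have h1 : (1 : F) ∈ (fun δ => δ ^ 2) '' {δ : F | δ ^ (Fintype.card K + 1) = 1} :=
      ⟨1, one_pow _, one_pow _⟩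
    rw [← Set.insert_eq_of_mem h1, ← Set.insert_sdiff_singleton, Set.image_insert_eq,
      Set.image_insert_eq, mul_one, hψα, Set.image_image, Set.image_congr hψ_cayley,
      Subfield.image_cayley_sq_pow_card_add_one hq hF hαK hσα, Set.singleton_union]
  refine ⟨fun _ => hmain, fun _ => ?_⟩
  rw [Set.image_union, hmain, Set.image_singleton, hψ0, Set.union_right_comm, Set.singleton_union,
    Set.insert_union]

/-- ψ carries the αQ-construction onto the (F_q, α)-construction.
If q ≡ 1 (mod 4), then ψ(α·Q₀) = {α} ∪ {c ∈ F_q : c − α a square};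
if q ≡ 3 (mod 4), then ψ(α·Q₀ ∪ {0}) = {α, −α} ∪ {c ∈ F_q : c − α a square}. -/
theorem stmt_18 (q : ℕ) (hq : Odd q) (hq' : IsPrimePow q)
    (F : Type*) [Field F] (hF : Nat.card F = q ^ 2)
    (K : Subfield F) (hK : Nat.card K = q)
    (d : F) (hdK : d ∈ K) (hd0 : d ≠ 0) (hdns : ¬ ∃ c ∈ K, c * c = d)
    (α : F) (hα : α ^ 2 = d)
    (ψ : F → F) (hψ : ∀ γ : F, γ ≠ α → ψ γ = (α * γ + d) / (γ - α)) (hψα : ψ α = α)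
    (Q Q₀ : Set F) (hQ : Q = {γ : F | γ ^ (q + 1) = 1})
    (hQ₀ : Q₀ = (fun γ => γ ^ 2) '' Q) :
    (q % 4 = 1 →
      ψ '' ((fun x => α * x) '' Q₀) = {α} ∪ {x : F | x ∈ K ∧ IsSquare (x - α)}) ∧
    (q % 4 = 3 →
      ψ '' (((fun x => α * x) '' Q₀) ∪ {0})
        = {α, -α} ∪ {x : F | x ∈ K ∧ IsSquare (x - α)}) :=
  stmt_18_general q hq F hF K hK d hdK hdns α hα ψ hψ hψα Q Q₀ hQ hQ₀
end
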